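/- Let (T, κ) be a monoidal monad on a monoidal category C with tensors on C^T. If f : A⊗B → C is a bimorphism, then there is a unique C^T-morphism f̄ : A ⊠ B → C with f̄ · q_{A,B} = c · Tf. Conversely, for any C^T-morphism g : A ⊠ B → C, the composite g · q_{A,B} · η_{A⊗B} : A⊗B → C is a bimorphism whose induced morphism is g itself. -/

import Mathlib

/-!
Algebra maps out of a free algebra `T X` correspond to maps `X ⟶ C` via `f ↦ c · T f`
(the free–forgetful adjunction), and under this correspondence precomposition with
`μ · T κ` and with `T (a ⊗ b)` becomes `f ↦ c · T f · κ` and `f ↦ f · (a ⊗ b)`.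
So `f` is a bimorphism exactly when `c · T f` coequalizes the pair defining `q`, and both
directions follow from the universal property of the coequalizer `q`.
-/

open CategoryTheory Category MonoidalCategory Limits

universe v u

variable {C : Type u} [Category.{v} C] [MonoidalCategory C]

/-- A monoidal-monad structure on a monad `T`: a natural family
`κ X Y : T X ⊗ T Y ⟶ T (X ⊗ Y)` making `(T, η_E, κ)` a monoidal functor and
compatible with the multiplication and unit of the monad. -/
structure MonoidalMonadStr (T : Monad C) where
  κ : ∀ X Y : C, T.obj X ⊗ T.obj Y ⟶ T.obj (X ⊗ Y)
  natural : ∀ {X Y X' Y' : C} (f : X ⟶ X') (g : Y ⟶ Y'),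
      (T.map f ⊗ₘ T.map g) ≫ κ X' Y' = κ X Y ≫ T.map (f ⊗ₘ g)
  assoc : ∀ X Y Z : C,
      (α_ (T.obj X) (T.obj Y) (T.obj Z)).hom ≫ (𝟙 (T.obj X) ⊗ₘ κ Y Z) ≫ κ X (Y ⊗ Z)
        = (κ X Y ⊗ₘ 𝟙 (T.obj Z)) ≫ κ (X ⊗ Y) Z ≫ T.map (α_ X Y Z).hom
  left_unit : ∀ X : C,
      (T.η.app (𝟙_ C) ⊗ₘ 𝟙 (T.obj X)) ≫ κ (𝟙_ C) X ≫ T.map (λ_ X).hom = (λ_ (T.obj X)).hom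
  right_unit : ∀ X : C,
      (𝟙 (T.obj X) ⊗ₘ T.η.app (𝟙_ C)) ≫ κ X (𝟙_ C) ≫ T.map (ρ_ X).hom = (ρ_ (T.obj X)).hom
  mu : ∀ X Y : C,
      κ (T.obj X) (T.obj Y) ≫ T.map (κ X Y) ≫ T.μ.app (X ⊗ Y)
        = (T.μ.app X ⊗ₘ T.μ.app Y) ≫ κ X Y
  unit : ∀ X Y : C, (T.η.app X ⊗ₘ T.η.app Y) ≫ κ X Y = T.η.app (X ⊗ Y)


/-- The Kleisli extension `μ · T g : T X ⟶ T Y` of `g : X ⟶ T Y`, as a morphism of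
free `T`-algebras. -/
def freeHom (T : Monad C) {X Y : C} (g : X ⟶ T.obj Y) :
    (Monad.free T).obj X ⟶ (Monad.free T).obj Y where
  f := T.map g ≫ T.μ.app Y
  h := by
    change T.map (T.map g ≫ T.μ.app Y) ≫ T.μ.app Y = T.μ.app X ≫ T.map g ≫ T.μ.app Y
    rw [Functor.map_comp, Category.assoc, T.assoc Y, ← Category.assoc, ← Category.assoc]
    congr 1
    exact T.μ.naturality g

/-- The transpose `c · T f : T X ⟶ C` of `f : X ⟶ C`, as a morphism from the free
`T`-algebra on `X` to the algebra `(C, c)`. -/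
def transHom (T : Monad C) {X : C} {Cc : Monad.Algebra T} (f : X ⟶ Cc.A) :
    (Monad.free T).obj X ⟶ Cc where
  f := T.map f ≫ Cc.a
  h := by
    change T.map (T.map f ≫ Cc.a) ≫ Cc.a = T.μ.app X ≫ T.map f ≫ Cc.a
    rw [Functor.map_comp, Category.assoc, ← Cc.assoc, ← Category.assoc, ← Category.assoc]
    congr 1
    exact T.μ.naturality f

/-- `f : A ⊗ B ⟶ C` is a bimorphism of `T`-algebras. -/
def IsBimorphism {T : Monad C} (κ : MonoidalMonadStr T) {A B Cc : Monad.Algebra T}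
    (f : A.A ⊗ B.A ⟶ Cc.A) : Prop :=
  κ.κ A.A B.A ≫ T.map f ≫ Cc.a = (A.a ⊗ₘ B.a) ≫ f

section
omit [MonoidalCategory C]
variable {T : Monad C}

theorem free_map_comp_transHom {X Y : C} {Cc : Monad.Algebra T} (h : X ⟶ Y) (f : Y ⟶ Cc.A) :
    (Monad.free T).map h ≫ transHom T f = transHom T (h ≫ f) := by
  ext
  change T.map h ≫ T.map f ≫ Cc.a = T.map (h ≫ f) ≫ Cc.a
  rw [T.map_comp_assoc]

theorem transHom_comp {X : C} {Cc D : Monad.Algebra T} (f : X ⟶ Cc.A) (h : Cc ⟶ D) :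
    transHom T f ≫ h = transHom T (f ≫ h.f) := by
  ext
  change (T.map f ≫ Cc.a) ≫ h.f = T.map (f ≫ h.f) ≫ D.a
  rw [T.map_comp_assoc, h.h, assoc]

theorem freeHom_comp_transHom {X Y : C} {Cc : Monad.Algebra T} (g : X ⟶ T.obj Y)
    (f : Y ⟶ Cc.A) : freeHom T g ≫ transHom T f = transHom T (g ≫ T.map f ≫ Cc.a) :=
  transHom_comp (Cc := (Monad.free T).obj Y) g (transHom T f)

theorem unit_comp_transHom_f {X : C} {Cc : Monad.Algebra T} (f : X ⟶ Cc.A) :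
    T.η.app X ≫ (transHom T f).f = f := by
  change T.η.app X ≫ T.map f ≫ Cc.a = f
  rw [← T.η.naturality_assoc, Cc.unit, Functor.id_map]
  exact comp_id f

theorem transHom_unit_comp {X : C} {Cc : Monad.Algebra T} (h : (Monad.free T).obj X ⟶ Cc) :
    transHom T (T.η.app X ≫ h.f) = h := by
  -- stated for `k : T.obj X ⟶ Cc.A`, since `rw` does not see through the carrier of `(free T).obj X`
  have retract (k : T.obj X ⟶ Cc.A) (hk : T.map k ≫ Cc.a = T.μ.app X ≫ k) :
      T.map (T.η.app X ≫ k) ≫ Cc.a = k := by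
    rw [T.map_comp_assoc, hk, ← assoc, T.right_unit, id_comp]
  ext
  exact retract h.f h.h

theorem transHom_injective {X : C} {Cc : Monad.Algebra T} :
    Function.Injective (transHom T : (X ⟶ Cc.A) → _) := fun f f' h => by
  rw [← unit_comp_transHom_f f, h, unit_comp_transHom_f]
end

theorem isBimorphism_iff_coequalizes {T : Monad C} (κ : MonoidalMonadStr T)
    {A B Cc : Monad.Algebra T} (f : A.A ⊗ B.A ⟶ Cc.A) :
    IsBimorphism κ f ↔
      freeHom T (κ.κ A.A B.A) ≫ transHom T f = (Monad.free T).map (A.a ⊗ₘ B.a) ≫ transHom T f := by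
  rw [freeHom_comp_transHom, free_map_comp_transHom, transHom_injective.eq_iff]
  rfl

/-- bimorphisms `A ⊗ B ⟶ C` factor uniquely through the tensor
coequalizer `q : T(A⊗B) ⟶ A ⊠ B`, and conversely every `C^T`-morphism
`g : A ⊠ B ⟶ C` arises this way from the bimorphism `g · q · η`. -/
theorem bimorphism_factors_through_tensor
    (T : Monad C) (κ : MonoidalMonadStr T) (A B Cc : Monad.Algebra T)
    {Q : Monad.Algebra T} (q : (Monad.free T).obj (A.A ⊗ B.A) ⟶ Q)
    (w : freeHom T (κ.κ A.A B.A) ≫ q = (Monad.free T).map (A.a ⊗ₘ B.a) ≫ q)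
    (hq : IsColimit (Cofork.ofπ q w)) :
    (∀ f : A.A ⊗ B.A ⟶ Cc.A, IsBimorphism κ f →
        ∃! fbar : Q ⟶ Cc, q ≫ fbar = transHom T f) ∧
    (∀ g : Q ⟶ Cc,
        IsBimorphism κ (T.η.app (A.A ⊗ B.A) ≫ q.f ≫ g.f) ∧
        q ≫ g = transHom T (T.η.app (A.A ⊗ B.A) ≫ q.f ≫ g.f)) := by
  refine ⟨fun f hf => Cofork.IsColimit.existsUnique hq _ ((isBimorphism_iff_coequalizes κ f).1 hf),
    fun g => ?_⟩
  have hg : transHom T (T.η.app (A.A ⊗ B.A) ≫ q.f ≫ g.f) = q ≫ g := transHom_unit_comp (q ≫ g)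
  refine ⟨(isBimorphism_iff_coequalizes κ _).2 ?_, hg.symm⟩
  rw [hg, reassoc_of% w]
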